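/- arXiv:2302.00416 — 4 statements merged into one kernel-verified Lean document; each statement's English description precedes it below -/
import Mathlib

section
/- Let Z be a translation invariant valuation on the space of compact intervals [a,b] ⊆ ℝ (including degenerate singletons). Then there exist a constant c₀ ∈ ℝ and an additive function ζ : [0,∞) → ℝ (satisfying ζ(x+y) = ζ(x) + ζ(y)) such that Z([a,b]) = c₀ + ζ(b − a) for all a ≤ b. -/
section IntervalValuation

variable {Z : Set ℝ → ℝ}

theorem valuation_Icc_adjacent
    (hval : ∀ a b c d : ℝ, a ≤ b → c ≤ d → max a c ≤ min b d →
      Z (Set.Icc a b) + Z (Set.Icc c d) =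
        Z (Set.Icc a b ∪ Set.Icc c d) + Z (Set.Icc a b ∩ Set.Icc c d))
    {a b c : ℝ} (hab : a ≤ b) (hbc : b ≤ c) :
    Z (Set.Icc a b) + Z (Set.Icc b c) = Z (Set.Icc a c) + Z (Set.Icc b b) := by
  have hinter : Set.Icc a b ∩ Set.Icc b c = Set.Icc b b := by
    rw [Set.Icc_inter_Icc, max_eq_right hab, min_eq_left hbc]
  rw [hval a b b c hab hbc (by simp [hab, hbc]), Set.Icc_union_Icc_eq_Icc hab hbc, hinter]

theorem translationInvariant_Icc_eq_Icc_zero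
    (htrans : ∀ a b t : ℝ, Z (Set.Icc (a + t) (b + t)) = Z (Set.Icc a b)) (a b : ℝ) :
    Z (Set.Icc a b) = Z (Set.Icc 0 (b - a)) := by
  simpa using htrans 0 (b - a) a

end IntervalValuation

theorem stmt_3 (Z : Set ℝ → ℝ)
    (hval : ∀ a b c d : ℝ, a ≤ b → c ≤ d → max a c ≤ min b d →
      Z (Set.Icc a b) + Z (Set.Icc c d) =
        Z (Set.Icc a b ∪ Set.Icc c d) + Z (Set.Icc a b ∩ Set.Icc c d))
    (htrans : ∀ a b t : ℝ, Z (Set.Icc (a + t) (b + t)) = Z (Set.Icc a b)) :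
    ∃ (c₀ : ℝ) (ζ : ℝ → ℝ),
      (∀ x y : ℝ, 0 ≤ x → 0 ≤ y → ζ (x + y) = ζ x + ζ y) ∧
      ∀ a b : ℝ, a ≤ b → Z (Set.Icc a b) = c₀ + ζ (b - a) := by
  -- `ζ x := Z [0, x] - Z {0}`; the valuation identity for `[0, x] ∪ [x, x + y]` is its additivity.
  refine ⟨Z (Set.Icc 0 0), fun x => Z (Set.Icc 0 x) - Z (Set.Icc 0 0), ?_, ?_⟩
  · intro x y hx hy
    have hsplit := valuation_Icc_adjacent hval hx (le_add_of_nonneg_right hy)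
    rw [translationInvariant_Icc_eq_Icc_zero htrans x (x + y),
      translationInvariant_Icc_eq_Icc_zero htrans x x, add_sub_cancel_left, sub_self] at hsplit
    linarith
  · intro a b _
    rw [translationInvariant_Icc_eq_Icc_zero htrans a b]
    ring
end

section
/- Let Z be a continuous, translation invariant valuation on compact intervals of ℝ. Then there exist constants c₀, c₁ ∈ ℝ such that Z([a,b]) = c₀ + c₁(b − a) for all a ≤ b. -/
/-!
Translating `[a, b]` to `[0, b - a]`, the valuation property applied to `[0, s]` and `[s, s + t]`
shows that `φ l := Z [0, l] - Z [0, 0]` is additive on `[0, ∞)`. Such a `φ` extends to the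
additive map `x ↦ φ x⁺ - φ x⁻` on `ℝ`, which is continuous and hence linear.
-/

open Set

section AdditiveOnNonneg

variable {φ : ℝ → ℝ}

theorem sub_eq_sub_of_add_nonneg (hadd : ∀ s t, 0 ≤ s → 0 ≤ t → φ (s + t) = φ s + φ t)
    {a b c d : ℝ} (ha : 0 ≤ a) (hb : 0 ≤ b) (hc : 0 ≤ c) (hd : 0 ≤ d) (h : a - b = c - d) :
    φ a - φ b = φ c - φ d := by
  have had := hadd a d ha hd
  have hbc := hadd b c hb hc
  rw [show a + d = b + c by linarith] at had
  linarith

def addMonoidHomOfAddNonneg (hadd : ∀ s t, 0 ≤ s → 0 ≤ t → φ (s + t) = φ s + φ t) :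
    ℝ →+ ℝ :=
  AddMonoidHom.mk' (fun x => φ x⁺ - φ x⁻) fun x y => by
    have h := sub_eq_sub_of_add_nonneg hadd (posPart_nonneg (x + y)) (negPart_nonneg (x + y))
      (add_nonneg (posPart_nonneg x) (posPart_nonneg y))
      (add_nonneg (negPart_nonneg x) (negPart_nonneg y))
      (by linear_combination posPart_sub_negPart (x + y) - posPart_sub_negPart x
        - posPart_sub_negPart y)
    rw [h, hadd _ _ (posPart_nonneg x) (posPart_nonneg y),
      hadd _ _ (negPart_nonneg x) (negPart_nonneg y)]
    ring

theorem eq_mul_of_continuousOn_of_add_nonneg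
    (hadd : ∀ s t, 0 ≤ s → 0 ≤ t → φ (s + t) = φ s + φ t) (hφ : ContinuousOn φ (Ici 0))
    {x : ℝ} (hx : 0 ≤ x) : φ x = x * φ 1 := by
  have hcont : Continuous (addMonoidHomOfAddNonneg hadd) :=
    (hφ.comp_continuous continuous_posPart posPart_nonneg).sub
      (hφ.comp_continuous continuous_negPart negPart_nonneg)
  have hlin := map_real_smul (addMonoidHomOfAddNonneg hadd) hcont x 1
  have hφ0 : φ 0 = 0 := by simpa using hadd 0 0 le_rfl le_rfl
  simpa [addMonoidHomOfAddNonneg, posPart_eq_self.mpr hx, negPart_eq_zero.mpr hx, hφ0]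
    using hlin

end AdditiveOnNonneg

section IntervalValuation

variable {Z : Set ℝ → ℝ}

theorem Icc_eq_Icc_zero_sub (htrans : ∀ a b t : ℝ, Z (Icc (a + t) (b + t)) = Z (Icc a b))
    (a b : ℝ) : Z (Icc a b) = Z (Icc 0 (b - a)) := by
  simpa using htrans 0 (b - a) a

theorem Icc_zero_add_add_Icc_zero
    (hval : ∀ a b c d : ℝ, a ≤ b → c ≤ d → max a c ≤ min b d →
      Z (Icc a b) + Z (Icc c d) = Z (Icc a b ∪ Icc c d) + Z (Icc a b ∩ Icc c d))
    (htrans : ∀ a b t : ℝ, Z (Icc (a + t) (b + t)) = Z (Icc a b))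
    {s t : ℝ} (hs : 0 ≤ s) (ht : 0 ≤ t) :
    Z (Icc 0 (s + t)) + Z (Icc 0 0) = Z (Icc 0 s) + Z (Icc 0 t) := by
  have hst : s ≤ s + t := le_add_of_nonneg_right ht
  have h := hval 0 s s (s + t) hs hst (by simp [hs, hst])
  rw [Icc_union_Icc_eq_Icc hs hst, Icc_inter_Icc, max_eq_right hs, min_eq_left hst,
    Icc_eq_Icc_zero_sub htrans s (s + t), Icc_eq_Icc_zero_sub htrans s s] at h
  simp only [add_sub_cancel_left, sub_self] at h
  linarith

theorem continuousOn_Icc_zero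
    (hcont : Continuous fun p : {p : ℝ × ℝ // p.1 ≤ p.2} => Z (Icc p.1.1 p.1.2)) :
    ContinuousOn (fun l => Z (Icc 0 l)) (Ici 0) := by
  rw [continuousOn_iff_continuous_domRestrict]
  exact hcont.comp ((continuous_const.prodMk continuous_subtype_val).subtype_mk fun l => l.2)

end IntervalValuation

theorem stmt_4 (Z : Set ℝ → ℝ)
    (hval : ∀ a b c d : ℝ, a ≤ b → c ≤ d → max a c ≤ min b d →
      Z (Set.Icc a b) + Z (Set.Icc c d) =
        Z (Set.Icc a b ∪ Set.Icc c d) + Z (Set.Icc a b ∩ Set.Icc c d))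
    (htrans : ∀ a b t : ℝ, Z (Set.Icc (a + t) (b + t)) = Z (Set.Icc a b))
    (hcont : Continuous fun p : {p : ℝ × ℝ // p.1 ≤ p.2} => Z (Set.Icc p.1.1 p.1.2)) :
    ∃ c₀ c₁ : ℝ, ∀ a b : ℝ, a ≤ b → Z (Set.Icc a b) = c₀ + c₁ * (b - a) := by
  set φ : ℝ → ℝ := fun l => Z (Icc 0 l) - Z (Icc 0 0)
  have hadd : ∀ s t, 0 ≤ s → 0 ≤ t → φ (s + t) = φ s + φ t := fun s t hs ht => by
    linarith [Icc_zero_add_add_Icc_zero hval htrans hs ht]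
  have hφ : ContinuousOn φ (Ici 0) := (continuousOn_Icc_zero hcont).sub continuousOn_const
  refine ⟨Z (Icc 0 0), φ 1, fun a b hab => ?_⟩
  have hlin := eq_mul_of_continuousOn_of_add_nonneg hadd hφ (sub_nonneg.mpr hab)
  rw [Icc_eq_Icc_zero_sub htrans a b]
  linear_combination hlin
end

section
/- Let S = {x₀ + Σᵢ rᵢ xᵢ : 1 ≥ r₁ ≥ ⋯ ≥ rₙ ≥ 0} be an n-dimensional simplex in ℝⁿ (with x₁,…,xₙ linearly independent). For 0 < t < 1 and 0 ≤ k ≤ n, define Qₖ(t) := {x₀ + Σᵢ tᵢ xᵢ : 1 ≥ t₁ ≥ ⋯ ≥ tₖ ≥ t ≥ t_{k+1} ≥ ⋯ ≥ tₙ ≥ 0}. Then S = ⋃ₖ Qₖ(t), and for i < k the intersection Qᵢ(t) ∩ Qₖ(t) has empty interior. -/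
/-!
Since the coefficients of a point of `S` are antitone, they cross the level `t` at some index
`k`, which puts the point in `Qₖ(t)`. For `i < k`, a point of `Qᵢ(t) ∩ Qₖ(t)` has (unique, by
linear independence) coefficients with `rᵢ = t`; this hyperplane has empty interior, since
moving along `xᵢ` changes `rᵢ`.
-/

/-- The simplex `{x₀ + Σ rᵢ xᵢ : 1 ≥ r₁ ≥ ⋯ ≥ rₙ ≥ 0}`. -/
def simplexSet {n : ℕ} (x₀ : EuclideanSpace ℝ (Fin n))
    (x : Fin n → EuclideanSpace ℝ (Fin n)) : Set (EuclideanSpace ℝ (Fin n)) :=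
  {y | ∃ r : Fin n → ℝ, Antitone r ∧ (∀ i, r i ∈ Set.Icc (0 : ℝ) 1) ∧
    y = x₀ + ∑ i, r i • x i}

/-- The piece `Qₖ(t) = {x₀ + Σ tᵢ xᵢ : 1 ≥ t₁ ≥ ⋯ ≥ tₖ ≥ t ≥ t_{k+1} ≥ ⋯ ≥ tₙ ≥ 0}`. -/
def simplexPiece {n : ℕ} (x₀ : EuclideanSpace ℝ (Fin n))
    (x : Fin n → EuclideanSpace ℝ (Fin n)) (t : ℝ) (k : Fin (n + 1)) :
    Set (EuclideanSpace ℝ (Fin n)) :=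
  {y | ∃ r : Fin n → ℝ, Antitone r ∧ (∀ i, r i ∈ Set.Icc (0 : ℝ) 1) ∧
    (∀ i : Fin n, (i : ℕ) < (k : ℕ) → t ≤ r i) ∧
    (∀ i : Fin n, (k : ℕ) ≤ (i : ℕ) → r i ≤ t) ∧
    y = x₀ + ∑ i, r i • x i}

open Filter Topology

theorem Antitone.exists_fin_threshold {α : Type*} [LinearOrder α] {n : ℕ} {r : Fin n → α}
    (hr : Antitone r) (t : α) :
    ∃ k : Fin (n + 1),
      (∀ i : Fin n, (i : ℕ) < k → t ≤ r i) ∧ ∀ i : Fin n, (k : ℕ) ≤ i → r i ≤ t := by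
  classical
  have hP : ∃ m, ∀ i : Fin n, m ≤ (i : ℕ) → r i ≤ t :=
    ⟨n, fun i hi => absurd i.isLt (by omega)⟩
  have hle : Nat.find hP ≤ n := Nat.find_min' hP fun i hi => absurd i.isLt (by omega)
  refine ⟨⟨Nat.find hP, Nat.lt_succ_of_le hle⟩, fun i hi => ?_, Nat.find_spec hP⟩
  obtain ⟨j, hij, hj⟩ : ∃ j : Fin n, (i : ℕ) ≤ j ∧ t < r j := by
    simpa using Nat.find_min hP hi
  exact hj.le.trans (hr (Fin.le_def.mpr hij))

theorem simplexSet_eq_iUnion_simplexPiece {n : ℕ} (x₀ : EuclideanSpace ℝ (Fin n))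
    (x : Fin n → EuclideanSpace ℝ (Fin n)) (t : ℝ) :
    simplexSet x₀ x = ⋃ k : Fin (n + 1), simplexPiece x₀ x t k := by
  ext y
  simp only [Set.mem_iUnion]
  constructor
  · rintro ⟨r, hr, hr01, rfl⟩
    obtain ⟨k, hlt, hge⟩ := hr.exists_fin_threshold t
    exact ⟨k, r, hr, hr01, hlt, hge, rfl⟩
  · rintro ⟨k, r, hr, hr01, -, -, rfl⟩
    exact ⟨r, hr, hr01, rfl⟩

section

variable {E : Type*} [TopologicalSpace E] [AddCommGroup E] [Module ℝ E]
  [ContinuousAdd E] [ContinuousSMul ℝ E]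

theorem interior_eq_empty_of_add_smul_mem {s : Set E} {v : E}
    (h : ∀ y ∈ s, ∀ δ : ℝ, y + δ • v ∈ s → δ = 0) : interior s = ∅ := by
  refine Set.eq_empty_of_forall_notMem fun y hy => ?_
  have hline : Tendsto (fun δ : ℝ => y + δ • v) (𝓝[≠] 0) (𝓝 y) := by
    have hcont : Continuous fun δ : ℝ => y + δ • v := by fun_prop
    simpa using (hcont.tendsto 0).mono_left nhdsWithin_le_nhds
  obtain ⟨δ, hδs, hδ⟩ :=
    ((hline.eventually (isOpen_interior.mem_nhds hy)).and self_mem_nhdsWithin).exists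
  exact hδ (h y (interior_subset hy) δ (interior_subset hδs))

theorem interior_setOf_coeff_eq_eq_empty {ι : Type*} [Fintype ι] {x : ι → E}
    (hx : LinearIndependent ℝ x) (x₀ : E) (j : ι) (c : ℝ) :
    interior {y | ∃ r : ι → ℝ, r j = c ∧ y = x₀ + ∑ i, r i • x i} = ∅ := by
  classical
  refine interior_eq_empty_of_add_smul_mem (v := x j) ?_
  rintro _ ⟨r, hrj, rfl⟩ δ ⟨s, hsj, hs⟩
  have hsum : ∑ i, (r + Pi.single j δ : ι → ℝ) i • x i = ∑ i, s i • x i := by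
    refine add_left_cancel (a := x₀) (Eq.trans ?_ hs)
    simp [add_smul, Finset.sum_add_distrib, Pi.single_apply, add_assoc]
  have hcoeff := Fintype.linearIndependent_iffₛ.mp hx _ _ hsum j
  simp only [Pi.add_apply, Pi.single_eq_same] at hcoeff
  linarith

end

theorem simplexPiece_inter_subset {n : ℕ} {x₀ : EuclideanSpace ℝ (Fin n)}
    {x : Fin n → EuclideanSpace ℝ (Fin n)} (hx : LinearIndependent ℝ x) (t : ℝ)
    {i k : Fin (n + 1)} {j : Fin n} (hij : (i : ℕ) ≤ j) (hjk : (j : ℕ) < k) :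
    simplexPiece x₀ x t i ∩ simplexPiece x₀ x t k ⊆
      {y | ∃ r : Fin n → ℝ, r j = t ∧ y = x₀ + ∑ i, r i • x i} := by
  rintro y ⟨⟨r, -, -, -, hle, rfl⟩, s, -, -, hge, -, hs⟩
  have hrs := Fintype.linearIndependent_iffₛ.mp hx r s (add_left_cancel hs) j
  exact ⟨r, le_antisymm (hle j hij) (hrs ▸ hge j hjk), rfl⟩

theorem stmt_6_general {n : ℕ} (x₀ : EuclideanSpace ℝ (Fin n))
    (x : Fin n → EuclideanSpace ℝ (Fin n)) (hx : LinearIndependent ℝ x)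
    (t : ℝ) :
    (simplexSet x₀ x = ⋃ k : Fin (n + 1), simplexPiece x₀ x t k) ∧
    ∀ i k : Fin (n + 1), i < k →
      interior (simplexPiece x₀ x t i ∩ simplexPiece x₀ x t k) = ∅ := by
  refine ⟨simplexSet_eq_iUnion_simplexPiece x₀ x t, fun i k hik => ?_⟩
  have hin : (i : ℕ) < n := lt_of_lt_of_le hik (Nat.lt_succ_iff.mp k.isLt)
  exact Set.subset_eq_empty
    (interior_mono (simplexPiece_inter_subset (j := ⟨i, hin⟩) hx t le_rfl hik))
    (interior_setOf_coeff_eq_eq_empty hx x₀ _ t)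

theorem stmt_6 {n : ℕ} (x₀ : EuclideanSpace ℝ (Fin n))
    (x : Fin n → EuclideanSpace ℝ (Fin n)) (hx : LinearIndependent ℝ x)
    (t : ℝ) (ht : 0 < t) (ht1 : t < 1) :
    (simplexSet x₀ x = ⋃ k : Fin (n + 1), simplexPiece x₀ x t k) ∧
    ∀ i k : Fin (n + 1), i < k →
      interior (simplexPiece x₀ x t i ∩ simplexPiece x₀ x t k) = ∅ :=
  stmt_6_general x₀ x hx t
end

section
/- Let K be a compact convex subset of ℝⁿ with 0 ∈ K, and let g_K be its gauge function. Then (1/n!)·∫_{ℝⁿ} e^{−g_K(x)} dx = Vₙ(K), where Vₙ is n-dimensional Lebesgue measure. -/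
/-!
For `x` with `g_K(x) < ∞` we have `e^{-g_K(x)} = ∫_{g_K(x)}^∞ e^{-s} ds`, and since `K` is
star-shaped about `0`, the set `{s > 0 | x ∈ s • K}` differs from `(g_K(x), ∞)` by at most one
point. Integrating over `x` and exchanging the integrals (Tonelli) gives
`∫₀^∞ e^{-s} Vₙ(s • K) ds = Vₙ(K) ∫₀^∞ sⁿ e^{-s} ds = n! Vₙ(K)`.
-/

open Pointwise MeasureTheory

/-- `e^{-y}` for `y : EReal`, with the convention `e^{-⊤} = 0`. -/
noncomputable def expNeg (y : EReal) : ℝ :=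
  if y = ⊤ then 0 else Real.exp (-(y.toReal))

/-- The gauge (Minkowski) function of `K`, with values in `(−∞, +∞]`. -/
noncomputable def gaugeE {n : ℕ} (K : Set (EuclideanSpace ℝ (Fin n)))
    (x : EuclideanSpace ℝ (Fin n)) : EReal :=
  ⨅ (l : ℝ) (_ : 0 < l) (_ : x ∈ l • K), (l : EReal)

open Set Real Filter Module
open scoped ENNReal

lemma expNeg_nonneg (y : EReal) : 0 ≤ expNeg y := by
  unfold expNeg; split_ifs <;> positivity

lemma lintegral_Ioi_exp_neg (a : ℝ) :
    ∫⁻ s in Ioi a, ENNReal.ofReal (exp (-s)) = ENNReal.ofReal (exp (-a)) := by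
  have hint : IntegrableOn (fun s : ℝ => exp (-s)) (Ioi a) := by
    simpa using exp_neg_integrableOn_Ioi a one_pos
  rw [← ofReal_integral_eq_lintegral_ofReal hint (ae_of_all _ fun s => (exp_pos _).le),
    integral_exp_neg_Ioi]

lemma lintegral_Ioi_exp_neg_mul_pow (n : ℕ) :
    ∫⁻ s in Ioi (0 : ℝ), ENNReal.ofReal (exp (-s) * s ^ n) = n.factorial := by
  have hn : (0 : ℝ) < n + 1 := by positivity
  have hpow : ∀ s : ℝ, s ^ ((n : ℝ) + 1 - 1) = s ^ n := fun s => by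
    rw [add_sub_cancel_right, rpow_natCast]
  have hint : IntegrableOn (fun s : ℝ => exp (-s) * s ^ n) (Ioi 0) := by
    simpa only [hpow] using GammaIntegral_convergent hn
  have hnonneg : ∀ᵐ s ∂volume.restrict (Ioi (0 : ℝ)), 0 ≤ exp (-s) * s ^ n := by
    filter_upwards [self_mem_ae_restrict measurableSet_Ioi] with s hs
    exact mul_nonneg (exp_pos _).le (pow_nonneg (le_of_lt hs) n)
  rw [← ofReal_integral_eq_lintegral_ofReal hint hnonneg, ← ENNReal.ofReal_natCast,
    ← Gamma_nat_eq_factorial, Gamma_eq_integral hn]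
  simp only [hpow]

lemma lintegral_exp_neg_of_isUpperSet {S : Set ℝ} (hS : IsUpperSet S) (hbdd : BddBelow S) :
    ∫⁻ s in S, ENNReal.ofReal (exp (-s)) = ENNReal.ofReal (expNeg (⨅ s ∈ S, (s : EReal))) := by
  rcases S.eq_empty_or_nonempty with rfl | ⟨s₀, hs₀⟩
  · simp [expNeg]
  obtain ⟨b, hb⟩ := hbdd
  set m : EReal := ⨅ s ∈ S, (s : EReal)
  have hm_top : m ≠ ⊤ := ne_top_of_le_ne_top (EReal.coe_ne_top s₀) (biInf_le _ hs₀)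
  have hm_bot : m ≠ ⊥ :=
    ne_bot_of_le_ne_bot (EReal.coe_ne_bot b) (le_iInf₂ fun s hs => EReal.coe_le_coe (hb hs))
  have hm : (m.toReal : EReal) = m := EReal.coe_toReal hm_top hm_bot
  have hS_sub : S ⊆ Ici m.toReal := fun s hs => by
    have : m ≤ s := biInf_le _ hs
    rwa [← hm, EReal.coe_le_coe_iff] at this
  have hIoi_sub : Ioi m.toReal ⊆ S := fun t ht => by
    have : m < t := by rwa [← hm, EReal.coe_lt_coe_iff]
    obtain ⟨s, hs, hst⟩ : ∃ s ∈ S, (s : EReal) < t := by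
      simpa only [m, iInf_lt_iff, exists_prop] using this
    exact hS (EReal.coe_lt_coe_iff.mp hst).le hs
  have hae : S =ᵐ[volume] Ioi m.toReal :=
    (hS_sub.eventuallyLE.trans Ioi_ae_eq_Ici.symm.le).antisymm hIoi_sub.eventuallyLE
  rw [setLIntegral_congr hae, lintegral_Ioi_exp_neg, expNeg, if_neg hm_top]

section Cone

variable {E : Type*}

lemma StarConvex.isUpperSet_setOf_mem_smul [AddCommGroup E] [Module ℝ E] {K : Set E}
    (hK : StarConvex ℝ 0 K) (x : E) : IsUpperSet {s : ℝ | 0 < s ∧ x ∈ s • K} := by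
  rintro s t hst ⟨hs, k, hk, rfl⟩
  have ht : 0 < t := hs.trans_le hst
  refine ⟨ht, (s / t) • k, hK.smul_mem hk (by positivity) ((div_le_one ht).mpr hst), ?_⟩
  simp only [smul_smul, mul_div_cancel₀ _ ht.ne']

variable [NormedAddCommGroup E] [NormedSpace ℝ E] [MeasurableSpace E] [BorelSpace E]

lemma measurableSet_setOf_pos_mem_smul {K : Set E} (hK : MeasurableSet K) :
    MeasurableSet {p : ℝ × E | 0 < p.1 ∧ p.2 ∈ p.1 • K} := by
  have : {p : ℝ × E | 0 < p.1 ∧ p.2 ∈ p.1 • K} = {p | 0 < p.1} ∩ (fun p => p.1⁻¹ • p.2) ⁻¹' K := by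
    ext ⟨s, x⟩
    simp only [mem_ofPred_eq, mem_inter_iff, mem_preimage]
    exact and_congr_right fun hs => mem_smul_set_iff_inv_smul_mem₀ hs.ne' K x
  rw [this]
  exact (measurableSet_lt measurable_const measurable_fst).inter
    ((measurable_fst.inv.smul measurable_snd) hK)

lemma setLIntegral_setOf_pos_mem_smul {K : Set E} (hK : MeasurableSet K) (g : ℝ → ℝ≥0∞)
    (x : E) :
    ∫⁻ s in {s : ℝ | 0 < s ∧ x ∈ s • K}, g s
      = ∫⁻ s, {p : ℝ × E | 0 < p.1 ∧ p.2 ∈ p.1 • K}.indicator (fun p => g p.1) (s, x) :=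
  (lintegral_indicator (measurable_prodMk_right (measurableSet_setOf_pos_mem_smul hK)) g).symm

lemma measurable_setLIntegral_exp_neg_setOf_mem_smul {K : Set E} (hK : MeasurableSet K) :
    Measurable fun x : E => ∫⁻ s in {s : ℝ | 0 < s ∧ x ∈ s • K}, ENNReal.ofReal (exp (-s)) := by
  simp only [setLIntegral_setOf_pos_mem_smul hK]
  exact ((measurable_fst.neg.exp.ennreal_ofReal).indicator
    (measurableSet_setOf_pos_mem_smul hK)).lintegral_prod_left'

lemma lintegral_setLIntegral_exp_neg_setOf_mem_smul [FiniteDimensional ℝ E] (μ : Measure E)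
    [μ.IsAddHaarMeasure] {K : Set E} (hK : MeasurableSet K) :
    ∫⁻ x, (∫⁻ s in {s : ℝ | 0 < s ∧ x ∈ s • K}, ENNReal.ofReal (exp (-s))) ∂μ
      = (finrank ℝ E).factorial * μ K := by
  set f : ℝ × E → ℝ≥0∞ := {p : ℝ × E | 0 < p.1 ∧ p.2 ∈ p.1 • K}.indicator
    fun p => ENNReal.ofReal (exp (-p.1))
  have hf : Measurable f :=
    (measurable_fst.neg.exp.ennreal_ofReal).indicator (measurableSet_setOf_pos_mem_smul hK)
  have hfiber : ∀ s, ∫⁻ x, f (s, x) ∂μ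
      = (Ioi 0).indicator (fun s => ENNReal.ofReal (exp (-s) * s ^ finrank ℝ E)) s * μ K := by
    intro s
    by_cases hs : 0 < s
    · have : ∀ x, f (s, x) = (s • K).indicator (fun _ => ENNReal.ofReal (exp (-s))) x := by
        intro x
        by_cases hx : x ∈ s • K <;> simp [f, hs, hx]
      simp_rw [this]
      rw [lintegral_indicator (hK.const_smul₀ s), setLIntegral_const, Measure.addHaar_smul,
        indicator_of_mem (show s ∈ Ioi 0 from hs), abs_of_pos (pow_pos hs _), ← mul_assoc,
        ← ENNReal.ofReal_mul (exp_pos _).le]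
    · simp [f, indicator, hs]
  calc ∫⁻ x, (∫⁻ s in {s : ℝ | 0 < s ∧ x ∈ s • K}, ENNReal.ofReal (exp (-s))) ∂μ
      = ∫⁻ x, (∫⁻ s, f (s, x)) ∂μ := by simp only [setLIntegral_setOf_pos_mem_smul hK]; rfl
    _ = ∫⁻ s, ∫⁻ x, f (s, x) ∂μ := lintegral_lintegral_swap (hf.comp measurable_swap).aemeasurable
    _ = ∫⁻ s, (Ioi 0).indicator (fun s => ENNReal.ofReal (exp (-s) * s ^ finrank ℝ E)) s * μ K :=
      lintegral_congr hfiber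
    _ = _ := by
      rw [lintegral_mul_const _ ((by fun_prop : Measurable fun s : ℝ =>
          ENNReal.ofReal (exp (-s) * s ^ finrank ℝ E)).indicator measurableSet_Ioi),
        lintegral_indicator measurableSet_Ioi, lintegral_Ioi_exp_neg_mul_pow]

end Cone

lemma ofReal_expNeg_gaugeE {n : ℕ} {K : Set (EuclideanSpace ℝ (Fin n))} (hK : StarConvex ℝ 0 K)
    (x : EuclideanSpace ℝ (Fin n)) :
    ENNReal.ofReal (expNeg (gaugeE K x))
      = ∫⁻ s in {s : ℝ | 0 < s ∧ x ∈ s • K}, ENNReal.ofReal (exp (-s)) := by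
  rw [lintegral_exp_neg_of_isUpperSet (hK.isUpperSet_setOf_mem_smul x) ⟨0, fun s hs => hs.1.le⟩]
  simp only [gaugeE, mem_ofPred_eq, iInf_and]

theorem stmt_16 {n : ℕ} (K : Set (EuclideanSpace ℝ (Fin n)))
    (hKc : IsCompact K) (hKconv : Convex ℝ K) (h0K : (0 : EuclideanSpace ℝ (Fin n)) ∈ K) :
    (1 / (Nat.factorial n : ℝ)) * ∫ x, expNeg (gaugeE K x) = (volume K).toReal := by
  have hK : StarConvex ℝ 0 K := hKconv.starConvex h0K
  have hmeas : Measurable fun x => expNeg (gaugeE K x) := by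
    have := (measurable_setLIntegral_exp_neg_setOf_mem_smul hKc.measurableSet).ennreal_toReal
    simpa only [← ofReal_expNeg_gaugeE hK, ENNReal.toReal_ofReal (expNeg_nonneg _)] using this
  rw [integral_eq_lintegral_of_nonneg_ae (ae_of_all _ fun x => expNeg_nonneg _)
      hmeas.aestronglyMeasurable]
  simp only [ofReal_expNeg_gaugeE hK]
  rw [lintegral_setLIntegral_exp_neg_setOf_mem_smul volume hKc.measurableSet,
    finrank_euclideanSpace_fin, ENNReal.toReal_mul, ENNReal.toReal_natCast]
  field_simp
end
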